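/- Let s ≥ 0 and r > 1/2. Then there exists a constant C > 0 (depending only on s and r) such that for all sequences a, b : ℤ → ℂ with finite ‖·‖_{ℓ²_s} and ‖·‖_{ℓ²_r} norms, one has ‖a ⋆ b‖_{ℓ²_s} ≤ C (‖a‖_{ℓ²_s} ‖b‖_{ℓ²_r} + ‖a‖_{ℓ²_r} ‖b‖_{ℓ²_s}). (This is the Fourier-coefficient form of the tame product estimate ‖fg‖_{H^s(𝕋)} ≲ ‖f‖_{H^s}‖g‖_{H^r} + ‖f‖_{H^r}‖g‖_{H^s}.) -/

import Mathlib

open scoped ENNReal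
open MeasureTheory

/-- Japanese bracket `⟨k⟩ = (1 + k²)^(1/2)` for an integer `k`. -/
noncomputable def jb (k : ℤ) : ℝ := Real.sqrt (1 + (k : ℝ) ^ 2)

lemma jb_pos (k : ℤ) : 0 < jb k := Real.sqrt_pos.2 (by positivity)

lemma jb_sub_add (k k' : ℤ) : jb k ≤ jb (k - k') + jb k' := by
  have h1 : Real.sqrt (1 + ((k - k' : ℤ) : ℝ) ^ 2) * Real.sqrt (1 + ((k' : ℤ) : ℝ) ^ 2)
      ≥ |((k - k' : ℤ) : ℝ) * (k' : ℝ)| := by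
    rw [← Real.sqrt_mul (by positivity), ← Real.sqrt_sq_eq_abs]
    exact Real.sqrt_le_sqrt (by nlinarith [sq_nonneg (((k-k':ℤ)):ℝ), sq_nonneg ((k':ℝ))])
  have h2 : ((k - k' : ℤ) : ℝ) = (k : ℝ) - (k' : ℝ) := by push_cast; ring
  unfold jb
  rw [show (k:ℝ) = ((k-k':ℤ):ℝ) + (k':ℝ) by rw [h2]; ring]
  set x := ((k-k':ℤ):ℝ)
  set y := ((k':ℤ):ℝ)
  have hx := Real.sq_sqrt (show (0:ℝ) ≤ 1 + x^2 by positivity)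
  have hy := Real.sq_sqrt (show (0:ℝ) ≤ 1 + y^2 by positivity)
  have hxn := Real.sqrt_nonneg (1 + x^2)
  have hyn := Real.sqrt_nonneg (1 + y^2)
  have habs : x * y ≤ |x * y| := le_abs_self _
  rw [show Real.sqrt (1+x^2) + Real.sqrt (1+y^2)
      = Real.sqrt ((Real.sqrt (1+x^2) + Real.sqrt (1+y^2))^2) from
      (Real.sqrt_sq (by positivity)).symm]
  exact Real.sqrt_le_sqrt (by nlinarith)

lemma jb_rpow_le {s : ℝ} (hs : 0 ≤ s) (k k' : ℤ) :
    jb k ^ s ≤ 2 ^ s * (jb (k - k') ^ s + jb k' ^ s) := by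
  have h := jb_sub_add k k'
  rcases le_total (jb (k - k')) (jb k') with hle | hle
  · have : jb k ≤ 2 * jb k' := by linarith
    calc jb k ^ s ≤ (2 * jb k') ^ s :=
          Real.rpow_le_rpow (jb_pos k).le this hs
      _ = 2 ^ s * jb k' ^ s := Real.mul_rpow (by norm_num) (jb_pos k').le
      _ ≤ 2 ^ s * (jb (k - k') ^ s + jb k' ^ s) := by
          have := Real.rpow_nonneg (jb_pos (k-k')).le s
          have h2 : (0:ℝ) ≤ 2 ^ s := Real.rpow_nonneg (by norm_num) s
          nlinarith
  · have : jb k ≤ 2 * jb (k - k') := by linarith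
    calc jb k ^ s ≤ (2 * jb (k - k')) ^ s :=
          Real.rpow_le_rpow (jb_pos k).le this hs
      _ = 2 ^ s * jb (k - k') ^ s := Real.mul_rpow (by norm_num) (jb_pos (k-k')).le
      _ ≤ 2 ^ s * (jb (k - k') ^ s + jb k' ^ s) := by
          have := Real.rpow_nonneg (jb_pos k').le s
          have h2 : (0:ℝ) ≤ 2 ^ s := Real.rpow_nonneg (by norm_num) s
          nlinarith

/-- Weighted `ℓ²_s` norm of a sequence `a : ℤ → ℂ`, valued in `[0,∞]`. -/
noncomputable def l2 (s : ℝ) (a : ℤ → ℂ) : ℝ≥0∞ :=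
  (∑' k : ℤ, ENNReal.ofReal (jb k ^ (2 * s) * ‖a k‖ ^ 2)) ^ (1 / 2 : ℝ)

noncomputable def Wf (s : ℝ) (a : ℤ → ℂ) (k : ℤ) : ℝ≥0∞ :=
  ENNReal.ofReal (jb k ^ s * ‖a k‖)

lemma l2_eq (s : ℝ) (a : ℤ → ℂ) :
    l2 s a = (∑' k : ℤ, (Wf s a k) ^ 2) ^ (1 / 2 : ℝ) := by
  unfold l2 Wf
  congr 1
  refine tsum_congr fun k => ?_
  rw [← ENNReal.ofReal_pow (mul_nonneg (Real.rpow_nonneg (jb_pos k).le s) (norm_nonneg _)),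
    mul_pow, ← Real.rpow_natCast (jb k ^ s) 2, ← Real.rpow_mul (jb_pos k).le]
  norm_num [mul_comm]

/-- Cauchy–Schwarz for `tsum` over `ℤ` in `ℝ≥0∞`. -/
lemma tsum_CS (f g : ℤ → ℝ≥0∞) :
    ∑' k, f k * g k ≤ (∑' k, f k ^ 2) ^ (1/2 : ℝ) * (∑' k, g k ^ 2) ^ (1/2 : ℝ) := by
  have h := ENNReal.lintegral_mul_le_Lp_mul_Lq (Measure.count : Measure ℤ)
    (Real.holderConjugate_iff.2 ⟨by norm_num, by norm_num⟩ : Real.HolderConjugate 2 2) (f := f) (g := g)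
    (measurable_of_countable f).aemeasurable (measurable_of_countable g).aemeasurable
  simp only [Pi.mul_apply, lintegral_count] at h
  calc ∑' k, f k * g k ≤ (∑' k, f k ^ (2:ℝ)) ^ (1/2:ℝ) * (∑' k, g k ^ (2:ℝ)) ^ (1/2:ℝ) := h
    _ = _ := by
        rw [show ((2:ℝ)) = ((2:ℕ):ℝ) by norm_num]
        simp [ENNReal.rpow_natCast]

/-- Young: `‖f ⋆ g‖₂ ≤ ‖f‖₂ ‖g‖₁` in `ℝ≥0∞`. -/
lemma young (f g : ℤ → ℝ≥0∞) :
    (∑' k : ℤ, (∑' k' : ℤ, f (k - k') * g k') ^ 2) ^ (1/2 : ℝ)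
      ≤ (∑' k : ℤ, f k ^ 2) ^ (1/2 : ℝ) * ∑' k : ℤ, g k := by
  set G := ∑' k : ℤ, g k with hG
  have pointwise : ∀ k : ℤ, (∑' k' : ℤ, f (k - k') * g k') ^ 2
      ≤ (∑' k' : ℤ, f (k - k') ^ 2 * g k') * G := by
    intro k
    have h := tsum_CS (fun k' => f (k - k') * g k' ^ (1/2:ℝ)) (fun k' => g k' ^ (1/2:ℝ))
    have e1 : ∀ k' : ℤ, f (k - k') * g k' ^ (1/2:ℝ) * g k' ^ (1/2:ℝ) = f (k - k') * g k' := by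
      intro k'
      rw [mul_assoc, ← ENNReal.rpow_add_of_nonneg _ _ (by norm_num) (by norm_num)]
      norm_num
    have e2 : ∀ k' : ℤ, (f (k - k') * g k' ^ (1/2:ℝ)) ^ 2 = f (k - k') ^ 2 * g k' := by
      intro k'
      rw [mul_pow, ← ENNReal.rpow_natCast (g k' ^ (1/2:ℝ)) 2, ← ENNReal.rpow_mul]
      norm_num
    have e3 : ∀ k' : ℤ, (g k' ^ (1/2:ℝ)) ^ 2 = g k' := by
      intro k'
      rw [← ENNReal.rpow_natCast (g k' ^ (1/2:ℝ)) 2, ← ENNReal.rpow_mul]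
      norm_num
    simp only [e1, e2, e3] at h
    calc (∑' k' : ℤ, f (k - k') * g k') ^ 2
        ≤ ((∑' k', f (k - k') ^ 2 * g k') ^ (1/2:ℝ) * G ^ (1/2:ℝ)) ^ 2 := by
          exact pow_le_pow_left' h 2
      _ = (∑' k', f (k - k') ^ 2 * g k') * G := by
          rw [mul_pow, ← ENNReal.rpow_natCast (_ ^ (1/2:ℝ)) 2, ← ENNReal.rpow_natCast (G ^ (1/2:ℝ)) 2,
            ← ENNReal.rpow_mul, ← ENNReal.rpow_mul]
          norm_num
  have sum_bound : ∑' k : ℤ, (∑' k' : ℤ, f (k - k') * g k') ^ 2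
      ≤ (∑' k : ℤ, f k ^ 2) * G ^ 2 := by
    calc ∑' k : ℤ, (∑' k' : ℤ, f (k - k') * g k') ^ 2
        ≤ ∑' k : ℤ, (∑' k' : ℤ, f (k - k') ^ 2 * g k') * G := ENNReal.tsum_le_tsum pointwise
      _ = (∑' k : ℤ, ∑' k' : ℤ, f (k - k') ^ 2 * g k') * G := by rw [ENNReal.tsum_mul_right]
      _ = (∑' k' : ℤ, ∑' k : ℤ, f (k - k') ^ 2 * g k') * G := by rw [ENNReal.tsum_comm]
      _ = (∑' k' : ℤ, (∑' k : ℤ, f (k - k') ^ 2) * g k') * G := by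
          congr 1; exact tsum_congr fun k' => ENNReal.tsum_mul_right
      _ = (∑' k' : ℤ, (∑' j : ℤ, f j ^ 2) * g k') * G := by
          congr 1; refine tsum_congr fun k' => ?_
          congr 1
          exact ((Equiv.subRight k').tsum_eq (fun j => f j ^ 2))
      _ = (∑' j : ℤ, f j ^ 2) * G * G := by rw [ENNReal.tsum_mul_left]
      _ = (∑' j : ℤ, f j ^ 2) * G ^ 2 := by ring
  calc (∑' k : ℤ, (∑' k' : ℤ, f (k - k') * g k') ^ 2) ^ (1/2 : ℝ)
      ≤ ((∑' k : ℤ, f k ^ 2) * G ^ 2) ^ (1/2 : ℝ) :=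
        ENNReal.rpow_le_rpow sum_bound (by norm_num)
    _ = (∑' k : ℤ, f k ^ 2) ^ (1/2:ℝ) * G := by
        rw [ENNReal.mul_rpow_of_nonneg _ _ (by norm_num), ← ENNReal.rpow_natCast G 2,
          ← ENNReal.rpow_mul]
        norm_num

lemma one_le_jb' (k : ℤ) : 1 ≤ jb k := by
  rw [show (1:ℝ) = Real.sqrt 1 by simp]
  exact Real.sqrt_le_sqrt (by nlinarith [sq_nonneg ((k:ℝ))])

/-- Finiteness of the `ℓ²_{-r}` mass of the weight, `r > 1/2`. -/
lemma K_lt_top {r : ℝ} (hr : 1 / 2 < r) :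
    ∑' k : ℤ, ENNReal.ofReal (jb k ^ (-(2 * r))) < ⊤ := by
  have hsum : Summable fun k : ℤ => |(k : ℝ)| ^ (-(2 * r)) :=
    Real.summable_abs_int_rpow (by linarith)
  have hbound : ∀ k : ℤ, ENNReal.ofReal (jb k ^ (-(2 * r)))
      ≤ (if k = 0 then 1 else 0) + ENNReal.ofReal (|(k : ℝ)| ^ (-(2 * r))) := by
    intro k
    by_cases hk : k = 0
    · subst hk
      simp only [if_pos rfl]
      refine le_add_of_le_of_nonneg ?_ zero_le
      refine ENNReal.ofReal_le_one.2 ?_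
      have : jb 0 = 1 := by unfold jb; norm_num
      rw [this, Real.one_rpow]
    · simp only [if_neg hk, zero_add]
      apply ENNReal.ofReal_le_ofReal
      have habs : |(k:ℝ)| ≤ jb k := by
        rw [← Real.sqrt_sq_eq_abs]
        exact Real.sqrt_le_sqrt (by nlinarith [sq_nonneg ((k:ℝ))])
      have hpos : 0 < |(k:ℝ)| := abs_pos.2 (by exact_mod_cast hk)
      exact Real.rpow_le_rpow_of_nonpos hpos habs (by linarith)
  calc ∑' k : ℤ, ENNReal.ofReal (jb k ^ (-(2 * r)))
      ≤ ∑' k : ℤ, ((if k = 0 then 1 else 0) + ENNReal.ofReal (|(k : ℝ)| ^ (-(2 * r)))) :=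
        ENNReal.tsum_le_tsum hbound
    _ = (∑' k : ℤ, (if k = 0 then (1:ℝ≥0∞) else 0)) + ∑' k : ℤ, ENNReal.ofReal (|(k : ℝ)| ^ (-(2 * r))) :=
        ENNReal.tsum_add
    _ < ⊤ := by
        apply ENNReal.add_lt_top.2
        constructor
        · rw [tsum_eq_single 0 (by intro b hb; simp [hb])]
          · simp
        · rw [← ENNReal.ofReal_tsum_of_nonneg (fun k => Real.rpow_nonneg (abs_nonneg _) _) hsum]
          exact ENNReal.ofReal_lt_top

noncomputable def Nf (a : ℤ → ℂ) (k : ℤ) : ℝ≥0∞ := ENNReal.ofReal ‖a k‖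

/-- `ℓ¹` bound by the `ℓ²_r` norm, `r > 1/2`. -/
lemma l1_bound {r : ℝ} (a : ℤ → ℂ) :
    ∑' k : ℤ, Nf a k
      ≤ (∑' k : ℤ, ENNReal.ofReal (jb k ^ (-(2 * r)))) ^ (1/2 : ℝ) * l2 r a := by
  have hdec : ∀ k : ℤ, Nf a k = ENNReal.ofReal (jb k ^ (-r)) * Wf r a k := by
    intro k
    rw [Wf, Nf, ← ENNReal.ofReal_mul (Real.rpow_nonneg (jb_pos k).le _), ← mul_assoc,
      ← Real.rpow_add (jb_pos k)]
    norm_num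
  have hsq : ∀ k : ℤ, (ENNReal.ofReal (jb k ^ (-r))) ^ 2 = ENNReal.ofReal (jb k ^ (-(2 * r))) := by
    intro k
    rw [← ENNReal.ofReal_pow (Real.rpow_nonneg (jb_pos k).le _),
      ← Real.rpow_natCast (jb k ^ (-r)) 2, ← Real.rpow_mul (jb_pos k).le]
    norm_num [mul_comm]
  calc ∑' k : ℤ, Nf a k = ∑' k : ℤ, ENNReal.ofReal (jb k ^ (-r)) * Wf r a k :=
        tsum_congr hdec
    _ ≤ (∑' k : ℤ, (ENNReal.ofReal (jb k ^ (-r))) ^ 2) ^ (1/2:ℝ)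
          * (∑' k : ℤ, (Wf r a k) ^ 2) ^ (1/2:ℝ) := tsum_CS _ _
    _ = _ := by rw [l2_eq]; congr 1; exact congrArg (· ^ (1/2:ℝ)) (tsum_congr hsq)

/-- Minkowski for `tsum` over `ℤ` in `ℝ≥0∞`, exponent 2. -/
lemma tsum_minkowski (u v : ℤ → ℝ≥0∞) :
    (∑' k : ℤ, (u k + v k) ^ 2) ^ (1/2:ℝ)
      ≤ (∑' k : ℤ, u k ^ 2) ^ (1/2:ℝ) + (∑' k : ℤ, v k ^ 2) ^ (1/2:ℝ) := by
  have h := ENNReal.lintegral_Lp_add_le (μ := (Measure.count : Measure ℤ))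
    (measurable_of_countable u).aemeasurable (measurable_of_countable v).aemeasurable
    (by norm_num : (1:ℝ) ≤ 2)
  simp only [lintegral_count, Pi.add_apply] at h
  have e2 : ∀ x : ℝ≥0∞, x ^ (2:ℝ) = x ^ (2:ℕ) := fun x => by
    rw [show ((2:ℝ)) = ((2:ℕ):ℝ) by norm_num, ENNReal.rpow_natCast]
  simpa only [e2] using h

lemma enorm_tsum_le (f : ℤ → ℂ) :
    ENNReal.ofReal ‖∑' i, f i‖ ≤ ∑' i, ENNReal.ofReal ‖f i‖ := by
  by_cases h : Summable f
  · have hn : Summable fun i => ‖f i‖ := summable_norm_iff.2 h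
    calc ENNReal.ofReal ‖∑' i, f i‖ ≤ ENNReal.ofReal (∑' i, ‖f i‖) :=
          ENNReal.ofReal_le_ofReal (norm_tsum_le_tsum_norm hn)
      _ = ∑' i, ENNReal.ofReal ‖f i‖ :=
          ENNReal.ofReal_tsum_of_nonneg (fun i => norm_nonneg _) hn
  · rw [tsum_eq_zero_of_not_summable h]
    simp

/-- Convolution of sequences on `ℤ`. -/
noncomputable def conv (a b : ℤ → ℂ) : ℤ → ℂ := fun k => ∑' k' : ℤ, a (k - k') * b k'

lemma jb_rpow_le' {s : ℝ} (hs : 0 ≤ s) (k k' : ℤ) :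
    jb k ^ s ≤ 2 ^ s * (jb (k - k') ^ s + jb k' ^ s) := jb_rpow_le hs k k'

lemma key {s : ℝ} (hs : 0 ≤ s) (a b : ℤ → ℂ) (k : ℤ) :
    Wf s (conv a b) k ≤ ENNReal.ofReal (2 ^ s) *
      ((∑' k' : ℤ, Wf s a (k - k') * Nf b k') + ∑' k' : ℤ, Nf a (k - k') * Wf s b k') := by
  have hjb : 0 ≤ jb k ^ s := Real.rpow_nonneg (jb_pos k).le s
  have step1 : Wf s (conv a b) k
      ≤ ∑' k' : ℤ, ENNReal.ofReal (jb k ^ s) * ENNReal.ofReal ‖a (k - k') * b k'‖ := by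
    rw [Wf, ENNReal.ofReal_mul hjb, ENNReal.tsum_mul_left]
    exact mul_le_mul_right (enorm_tsum_le fun k' => a (k - k') * b k') _
  refine step1.trans ?_
  have step2 : ∀ k' : ℤ,
      ENNReal.ofReal (jb k ^ s) * ENNReal.ofReal ‖a (k - k') * b k'‖
        ≤ ENNReal.ofReal (2 ^ s) * (Wf s a (k - k') * Nf b k' + Nf a (k - k') * Wf s b k') := by
    intro k'
    rw [← ENNReal.ofReal_mul hjb, norm_mul]
    have hreal : jb k ^ s * (‖a (k - k')‖ * ‖b k'‖)
        ≤ 2 ^ s * ((jb (k - k') ^ s * ‖a (k - k')‖) * ‖b k'‖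
            + ‖a (k - k')‖ * (jb k' ^ s * ‖b k'‖)) := by
      have h := jb_rpow_le' hs k k'
      have hab : (0:ℝ) ≤ ‖a (k - k')‖ * ‖b k'‖ := by positivity
      nlinarith [mul_le_mul_of_nonneg_right h hab]
    refine (ENNReal.ofReal_le_ofReal hreal).trans (le_of_eq ?_)
    rw [ENNReal.ofReal_mul (Real.rpow_nonneg (by norm_num) s)]
    congr 1
    have n1 : (0:ℝ) ≤ jb (k - k') ^ s * ‖a (k - k')‖ :=
      mul_nonneg (Real.rpow_nonneg (jb_pos _).le _) (norm_nonneg _)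
    have n2 : (0:ℝ) ≤ jb k' ^ s * ‖b k'‖ :=
      mul_nonneg (Real.rpow_nonneg (jb_pos _).le _) (norm_nonneg _)
    rw [ENNReal.ofReal_add (mul_nonneg n1 (norm_nonneg _)) (mul_nonneg (norm_nonneg _) n2)]
    congr 1
    · rw [Wf, Nf, ← ENNReal.ofReal_mul n1]
    · rw [Wf, Nf, ← ENNReal.ofReal_mul (norm_nonneg _)]
  calc ∑' k' : ℤ, ENNReal.ofReal (jb k ^ s) * ENNReal.ofReal ‖a (k - k') * b k'‖
      ≤ ∑' k' : ℤ, ENNReal.ofReal (2 ^ s)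
          * (Wf s a (k - k') * Nf b k' + Nf a (k - k') * Wf s b k') :=
        ENNReal.tsum_le_tsum step2
    _ = _ := by rw [ENNReal.tsum_mul_left, ENNReal.tsum_add]

/-- Tame product estimate in Fourier-coefficient form:
`‖a ⋆ b‖_{ℓ²_s} ≤ C (‖a‖_{ℓ²_s} ‖b‖_{ℓ²_r} + ‖a‖_{ℓ²_r} ‖b‖_{ℓ²_s})` for `s ≥ 0`, `r > 1/2`. -/
theorem tame_product_estimate (s r : ℝ) (hs : 0 ≤ s) (hr : 1 / 2 < r) :
    ∃ C : ℝ, 0 < C ∧ ∀ a b : ℤ → ℂ,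
      l2 s a < ⊤ → l2 r a < ⊤ → l2 s b < ⊤ → l2 r b < ⊤ →
      l2 s (conv a b) ≤ ENNReal.ofReal C * (l2 s a * l2 r b + l2 r a * l2 s b) := by
  set K : ℝ≥0∞ := ∑' k : ℤ, ENNReal.ofReal (jb k ^ (-(2 * r))) with hK
  have hKfin : K < ⊤ := K_lt_top hr
  set Kh : ℝ≥0∞ := K ^ (1/2:ℝ) with hKh
  have hKhfin : Kh ≠ ⊤ := by
    rw [hKh]
    exact (ENNReal.rpow_lt_top_of_nonneg (by norm_num) hKfin.ne).ne
  refine ⟨2 ^ s * (Kh.toReal + 1), ?_, ?_⟩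
  · have := ENNReal.toReal_nonneg (a := Kh)
    have h2 : (0:ℝ) < 2 ^ s := Real.rpow_pos_of_pos (by norm_num) s
    nlinarith
  intro a b _ _ _ _
  set P : ℤ → ℝ≥0∞ := fun k => ∑' k' : ℤ, Wf s a (k - k') * Nf b k' with hP
  set Q : ℤ → ℝ≥0∞ := fun k => ∑' k' : ℤ, Nf a (k - k') * Wf s b k' with hQ
  have hQ' : ∀ k : ℤ, Q k = ∑' k' : ℤ, Wf s b (k - k') * Nf a k' := by
    intro k
    rw [hQ]
    rw [← (Equiv.subLeft k).tsum_eq (fun k' => Wf s b (k - k') * Nf a k')]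
    refine tsum_congr fun x => ?_
    simp [Equiv.subLeft, mul_comm]
  have hmain : l2 s (conv a b) ≤ ENNReal.ofReal (2 ^ s) *
      ((∑' k : ℤ, P k ^ 2) ^ (1/2:ℝ) + (∑' k : ℤ, Q k ^ 2) ^ (1/2:ℝ)) := by
    calc l2 s (conv a b) = (∑' k : ℤ, (Wf s (conv a b) k) ^ 2) ^ (1/2:ℝ) := l2_eq _ _
      _ ≤ (∑' k : ℤ, (ENNReal.ofReal (2 ^ s) * (P k + Q k)) ^ 2) ^ (1/2:ℝ) := by
          refine ENNReal.rpow_le_rpow (ENNReal.tsum_le_tsum fun k => ?_) (by norm_num)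
          exact pow_le_pow_left' (key hs a b k) 2
      _ = ENNReal.ofReal (2 ^ s) * (∑' k : ℤ, (P k + Q k) ^ 2) ^ (1/2:ℝ) := by
          simp only [mul_pow, ENNReal.tsum_mul_left]
          rw [ENNReal.mul_rpow_of_nonneg _ _ (by norm_num),
            ← ENNReal.rpow_natCast (ENNReal.ofReal (2^s)) 2, ← ENNReal.rpow_mul]
          norm_num
      _ ≤ _ := mul_le_mul_right (tsum_minkowski P Q) _
  have hPbound : (∑' k : ℤ, P k ^ 2) ^ (1/2:ℝ) ≤ l2 s a * (Kh * l2 r b) := by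
    calc (∑' k : ℤ, P k ^ 2) ^ (1/2:ℝ)
        ≤ (∑' k : ℤ, (Wf s a k) ^ 2) ^ (1/2:ℝ) * ∑' k : ℤ, Nf b k := young _ _
      _ ≤ (∑' k : ℤ, (Wf s a k) ^ 2) ^ (1/2:ℝ) * (Kh * l2 r b) :=
          mul_le_mul_right (l1_bound b) _
      _ = l2 s a * (Kh * l2 r b) := by rw [l2_eq s a]
  have hQbound : (∑' k : ℤ, Q k ^ 2) ^ (1/2:ℝ) ≤ l2 s b * (Kh * l2 r a) := by
    have : (∑' k : ℤ, Q k ^ 2) = ∑' k : ℤ, (∑' k' : ℤ, Wf s b (k - k') * Nf a k') ^ 2 := by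
      exact tsum_congr fun k => by rw [hQ' k]
    rw [this]
    calc (∑' k : ℤ, (∑' k' : ℤ, Wf s b (k - k') * Nf a k') ^ 2) ^ (1/2:ℝ)
        ≤ (∑' k : ℤ, (Wf s b k) ^ 2) ^ (1/2:ℝ) * ∑' k : ℤ, Nf a k := young _ _
      _ ≤ (∑' k : ℤ, (Wf s b k) ^ 2) ^ (1/2:ℝ) * (Kh * l2 r a) :=
          mul_le_mul_right (l1_bound a) _
      _ = l2 s b * (Kh * l2 r a) := by rw [l2_eq s b]
  have hconst : ENNReal.ofReal (2 ^ s) * Kh ≤ ENNReal.ofReal (2 ^ s * (Kh.toReal + 1)) := by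
    rw [ENNReal.ofReal_mul (Real.rpow_nonneg (by norm_num) s)]
    refine mul_le_mul_right ?_ _
    calc Kh = ENNReal.ofReal Kh.toReal := (ENNReal.ofReal_toReal hKhfin).symm
      _ ≤ ENNReal.ofReal (Kh.toReal + 1) := ENNReal.ofReal_le_ofReal (by linarith)
  calc l2 s (conv a b)
      ≤ ENNReal.ofReal (2 ^ s) * ((∑' k : ℤ, P k ^ 2) ^ (1/2:ℝ) + (∑' k : ℤ, Q k ^ 2) ^ (1/2:ℝ)) :=
        hmain
    _ ≤ ENNReal.ofReal (2 ^ s) * (l2 s a * (Kh * l2 r b) + l2 s b * (Kh * l2 r a)) :=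
        mul_le_mul_right (add_le_add hPbound hQbound) _
    _ = (ENNReal.ofReal (2 ^ s) * Kh) * (l2 s a * l2 r b + l2 r a * l2 s b) := by ring
    _ ≤ ENNReal.ofReal (2 ^ s * (Kh.toReal + 1)) * (l2 s a * l2 r b + l2 r a * l2 s b) :=
        mul_le_mul_left hconst _
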